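/- Let q be an odd positive integer, p coprime to q, and φ(p) the inverse of 4p modulo q. Then for every integer m, G(-p, m+1, q) · conj(G(-p, m, q)) / q = exp(2πi·φ(p)·(2m+1)/q), where G is the generalized quadratic Gauss sum. -/

import Mathlib

/-
Write `e` for the standard additive character of `ZMod q`. Multiplying `G(a, b + c)` by the
conjugate of `G(a, b)` gives a double sum of `e(a x² + (b + c) x - a y² - b y)`; substituting
`x = y + t` makes the exponent linear in `y`, namely `a t² + (b + c) t + (2 a t + c) y`. Summing
over `y` kills every `t` except the root `t = c u` of `2 a t + c`, where `u = -(2a)⁻¹`. With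
`a = -p`, `c = 1` and `u = 2 φ(p)`, the surviving term is `q · e(φ(p) (2m + 1))`.
-/

open Complex Real Finset

/-- Generalized quadratic Gauss sum `G(a, b, c) = Σ_{n=0}^{c-1} exp(2πi(a n² + b n)/c)`. -/
noncomputable def gaussSum' (a b : ℤ) (c : ℕ) : ℂ :=
  ∑ n ∈ Finset.range c, Complex.exp (2 * Real.pi * Complex.I * ((a * n ^ 2 + b * n) / c))

theorem Finset.sum_range_eq_sum_zmod {M : Type*} [AddCommMonoid M] (q : ℕ) [NeZero q]
    (f : ZMod q → M) : ∑ n ∈ range q, f n = ∑ x : ZMod q, f x :=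
  Finset.sum_nbij' (↑) ZMod.val (fun _ _ ↦ mem_univ _)
    (fun x _ ↦ mem_range.mpr (ZMod.val_lt x))
    (fun _ hn ↦ ZMod.val_cast_of_lt (mem_range.mp hn)) (fun x _ ↦ ZMod.natCast_zmod_val x)
    (fun _ _ ↦ rfl)

theorem gaussSum'_eq_sum_stdAddChar (a b : ℤ) (q : ℕ) [NeZero q] :
    gaussSum' a b q = ∑ x : ZMod q, ZMod.stdAddChar ((a : ZMod q) * x ^ 2 + (b : ZMod q) * x) := by
  rw [gaussSum', ← sum_range_eq_sum_zmod]
  refine sum_congr rfl fun n _ ↦ ?_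
  have := ZMod.stdAddChar_coe (N := q) (a * n ^ 2 + b * n)
  push_cast at this
  rw [this, mul_div_assoc]

namespace AddChar

variable {R K : Type*} [CommRing R] [Fintype R] [DecidableEq R] [RCLike K]

theorem sum_quadratic_mul_conj_sum_quadratic {ψ : AddChar R K} (hψ : ψ.IsPrimitive)
    {a u : R} (hu : -2 * a * u = 1) (b c : R) :
    (∑ x, ψ (a * x ^ 2 + (b + c) * x)) * starRingEnd K (∑ y, ψ (a * y ^ 2 + b * y)) =
      Fintype.card R * ψ (a * (c * u) ^ 2 + (b + c) * (c * u)) := by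
  have root_iff (t : R) : 2 * a * t + c = 0 ↔ t = c * u := by
    constructor
    · intro h
      linear_combination (-u) * h - t * hu
    · rintro rfl
      linear_combination (-c) * hu
  calc (∑ x, ψ (a * x ^ 2 + (b + c) * x)) * starRingEnd K (∑ y, ψ (a * y ^ 2 + b * y))
      = ∑ y, ∑ x, ψ (a * x ^ 2 + (b + c) * x - (a * y ^ 2 + b * y)) := by
        simp_rw [map_sum, ← map_neg_eq_conj, sum_mul_sum, ← map_add_eq_mul, sub_eq_add_neg]
        exact sum_comm
    _ = ∑ y, ∑ t, ψ (a * t ^ 2 + (b + c) * t) * ψ (y * (2 * a * t + c)) := by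
        refine sum_congr rfl fun y _ ↦ ?_
        refine Fintype.sum_equiv (Equiv.subRight y) _ _ fun x ↦ ?_
        rw [← map_add_eq_mul, Equiv.subRight_apply]
        ring_nf
    _ = ∑ t, ψ (a * t ^ 2 + (b + c) * t) * if t = c * u then (Fintype.card R : K) else 0 := by
        rw [sum_comm]
        refine sum_congr rfl fun t _ ↦ ?_
        simp only [← mul_sum, sum_mulShift _ hψ, root_iff, Nat.cast_ite, Nat.cast_zero]
    _ = Fintype.card R * ψ (a * (c * u) ^ 2 + (b + c) * (c * u)) := by
        simp [mul_comm]

end AddChar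

theorem stmt4_general (q : ℕ) (hq : 0 < q) (p : ℤ)
    (φp : ℤ) (hφ : 4 * p * φp ≡ 1 [ZMOD (q : ℤ)]) (m : ℤ) :
    gaussSum' (-p) (m + 1) q * (starRingEnd ℂ) (gaussSum' (-p) m q) / q =
      Complex.exp (2 * Real.pi * Complex.I * (φp * (2 * m + 1) / q)) := by
  have : NeZero q := ⟨hq.ne'⟩
  have hu : -2 * ((-p : ℤ) : ZMod q) * ((2 * φp : ℤ) : ZMod q) = 1 := by
    have := (ZMod.intCast_eq_intCast_iff _ _ q).mpr hφ
    push_cast at this ⊢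
    linear_combination this
  have hexponent : ((-p : ℤ) : ZMod q) * ((2 * φp : ℤ) : ZMod q) ^ 2
      + ((m : ZMod q) + 1) * ((2 * φp : ℤ) : ZMod q) = ((φp * (2 * m + 1) : ℤ) : ZMod q) := by
    push_cast at hu ⊢
    linear_combination (-φp : ZMod q) * hu
  rw [gaussSum'_eq_sum_stdAddChar, gaussSum'_eq_sum_stdAddChar, Int.cast_add, Int.cast_one,
    AddChar.sum_quadratic_mul_conj_sum_quadratic (ZMod.isPrimitive_stdAddChar q) hu,
    one_mul, hexponent, ZMod.card, mul_div_cancel_left₀ _ (Nat.cast_ne_zero.mpr hq.ne'),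
    ZMod.stdAddChar_coe, mul_div_assoc]
  push_cast
  rfl

theorem stmt4 (q : ℕ) (hq : 0 < q) (hodd : Odd q) (p : ℤ) (hp : IsCoprime p (q : ℤ))
    (φp : ℤ) (hφ : 4 * p * φp ≡ 1 [ZMOD (q : ℤ)]) (m : ℤ) :
    gaussSum' (-p) (m + 1) q * (starRingEnd ℂ) (gaussSum' (-p) m q) / q =
      Complex.exp (2 * Real.pi * Complex.I * (φp * (2 * m + 1) / q)) :=
  stmt4_general q hq p φp hφ m
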